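/- Let p = 2, q = 2^h with h ≥ 1 (so λ = 2^h), m ≥ 1, π a permutation of {1,…,m}, and c_1,…,c_m, c ∈ Z_{2^h}. Then the two codes C_0^2 and C_1^2 form a (2,2,2^m)-CCC over Z_{2^h}: for all t,t' ∈ {0,1} and all |u| < 2^m, C(C_t^2, C_{t'}^2)(u) = 2^{m+1} if u = 0 and t = t', and equals 0 if (0 < |u| < 2^m and t = t') or (t ≠ t'). In particular, for each t ∈ {0,1} the pair (ψ(a_t^0), ψ(a_t^1)) is a Golay complementary pair of length 2^m. -/

import Mathlib

open Finset

/-- `ω_λ = exp(2π√(-1)/λ)`. -/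
noncomputable def omg (lam : ℕ) : ℂ := Complex.exp (2 * Real.pi * Complex.I / lam)

/-- Aperiodic cross-correlation of two length-`L` complex sequences at shift `u`. -/
noncomputable def aCorr (L : ℕ) (a b : ℕ → ℂ) (u : ℤ) : ℂ :=
  if 0 ≤ u then
    ∑ i ∈ Finset.range (L - u.toNat), a (i + u.toNat) * (starRingEnd ℂ) (b i)
  else
    ∑ i ∈ Finset.range (L - (-u).toNat), a i * (starRingEnd ℂ) (b (i + (-u).toNat))

/-- Cross-correlation sum of two `M × L` codes (matrices given row-wise). -/
noncomputable def codeCorr (M L : ℕ) (C D : ℕ → ℕ → ℂ) (u : ℤ) : ℂ :=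
  ∑ ν ∈ Finset.range M, aCorr L (C ν) (D ν) u

/-- Base-`p` digit vector of `γ` (digit `j` is `γ / p^j % p`). -/
def dig (p m γ : ℕ) : Fin m → ℕ := fun j => γ / p ^ (j : ℕ) % p

/-- The quadratic multivariable function
`f(v) = (λ/p)·Σ_{β=1}^{m-1} v_{π(β)} v_{π(β+1)} + Σ_{β=1}^{m} c_β v_β` (as an integer). -/
def fQuad (p m lam : ℕ) (π : Equiv.Perm (Fin m)) (cf : Fin m → ZMod lam)
    (v : Fin m → ℕ) : ℤ :=
  ((lam / p : ℕ) : ℤ) * ∑ β : Fin (m - 1),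
      (v (π (Fin.castLE (Nat.sub_le m 1) β)) : ℤ) *
        (v (π ⟨(β : ℕ) + 1, by have := β.isLt; omega⟩) : ℤ)
    + ∑ β : Fin m, ((cf β).val : ℤ) * (v β : ℤ)

/-- `a_t^α(v) = f(v) + (λ/p)·α·v_{π(1)} + (λ/p)·t·v_{π(m)} + c` (as an integer). -/
def aFun (p m lam : ℕ) (hm : 0 < m) (π : Equiv.Perm (Fin m)) (cf : Fin m → ZMod lam)
    (c : ZMod lam) (t α : ℕ) (v : Fin m → ℕ) : ℤ :=
  fQuad p m lam π cf v
    + ((lam / p : ℕ) : ℤ) * (α : ℤ) * (v (π ⟨0, hm⟩) : ℤ)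
    + ((lam / p : ℕ) : ℤ) * (t : ℤ) * (v (π ⟨m - 1, by omega⟩) : ℤ)
    + ((c.val : ℕ) : ℤ)

/-- The code `C_t^p`: the `p × p^m` matrix whose `α`-th row is `ψ(a_t^α)`. -/
noncomputable def codeC (p m lam : ℕ) (hm : 0 < m) (π : Equiv.Perm (Fin m))
    (cf : Fin m → ZMod lam) (c : ZMod lam) (t : ℕ) : ℕ → ℕ → ℂ :=
  fun α γ => omg lam ^ (aFun p m lam hm π cf c t α (dig p m γ))

/-!
Write `ω = ω_{2^h}`, so that `ω ^ 2^(h-1) = -1`. At a shift `u ≥ 0` the correlation is a sum,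
over `α` and over the pairs `(i + u, i)`, of `ω ^ (a_t^α(i + u) - a_{t'}^α(i))`; negative shifts
follow by conjugation. Everything except the trivial case `u = 0, t = t'` cancels in pairs of terms
whose exponents differ by an odd multiple of `2^(h-1)`:
* `u = 0, t ≠ t'`: flip the digit `v_{π(m)}` of `i`;
* `u > 0` and the digits `v_{π(1)}` of `i + u` and `i` differ: the terms `α = 0, 1` cancel;
* otherwise let `π(b)` be the first vertex of the path `π(1), …, π(m)` at which the digits of
  `i + u` and `i` differ, so `b ≥ 2`. Flipping the digit `v_{π(b-1)}` of `i` flips the same digit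
  of `i + u`, keeps `b`, and changes the quadratic part of the exponent difference by
  `2^(h-1) (1 - 2 v_{π(b-1)}) (v_{π(b)}(i + u) - v_{π(b)}(i))`, an odd multiple of `2^(h-1)`.
-/

lemma omg_ne_zero (lam : ℕ) : omg lam ≠ 0 := Complex.exp_ne_zero _

lemma conj_omg_zpow (lam : ℕ) (n : ℤ) : starRingEnd ℂ (omg lam ^ n) = omg lam ^ (-n) := by
  have : starRingEnd ℂ (omg lam) = (omg lam)⁻¹ := by
    rw [omg, ← Complex.exp_conj, ← Complex.exp_neg]
    simp [Complex.conj_I, neg_div, map_ofNat]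
  rw [map_zpow₀, this, inv_zpow, zpow_neg]

lemma omg_two_pow_pow_two_pow_pred {h : ℕ} (hh : 0 < h) : omg (2 ^ h) ^ 2 ^ (h - 1) = -1 := by
  have hζ : IsPrimitiveRoot (omg (2 ^ h)) (2 ^ h) := by
    simpa [omg] using Complex.isPrimitiveRoot_exp (2 ^ h) (by positivity)
  refine (hζ.pow (by positivity) ?_).eq_neg_one_of_two_right
  rw [← pow_succ]; congr; omega

lemma omg_two_pow_zpow_add_odd {h : ℕ} (hh : 0 < h) (n : ℤ) {ε : ℤ} (hε : Odd ε) :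
    omg (2 ^ h) ^ (n + 2 ^ (h - 1) * ε) = -omg (2 ^ h) ^ n := by
  rw [zpow_add₀ (omg_ne_zero _), zpow_mul, show (2 : ℤ) ^ (h - 1) = (2 ^ (h - 1) : ℕ) by simp,
    zpow_natCast, omg_two_pow_pow_two_pow_pred hh, hε.neg_one_zpow, mul_neg_one]

lemma omg_two_pow_zpow_add_zpow_eq_zero {h : ℕ} (hh : 0 < h) {E E' ε : ℤ} (hε : Odd ε)
    (hE : E' = E + 2 ^ (h - 1) * ε) : omg (2 ^ h) ^ E + omg (2 ^ h) ^ E' = 0 := by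
  rw [hE, omg_two_pow_zpow_add_odd hh _ hε, add_neg_cancel]

lemma aCorr_of_neg (L : ℕ) (a b : ℕ → ℂ) {u : ℤ} (hu : u < 0) :
    aCorr L a b u = starRingEnd ℂ (aCorr L b a (-u)) := by
  rw [aCorr, aCorr, if_neg hu.not_ge, if_pos (by omega), map_sum]
  refine sum_congr rfl fun i _ => ?_
  rw [map_mul, Complex.conj_conj, mul_comm]

lemma codeCorr_of_neg (M L : ℕ) (C D : ℕ → ℕ → ℂ) {u : ℤ} (hu : u < 0) :
    codeCorr M L C D u = starRingEnd ℂ (codeCorr M L D C (-u)) := by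
  rw [codeCorr, codeCorr, map_sum]
  exact sum_congr rfl fun ν _ => aCorr_of_neg L (C ν) (D ν) hu

lemma aCorr_omg_zpow (L lam : ℕ) (E F : ℕ → ℤ) (u : ℕ) :
    aCorr L (fun γ => omg lam ^ E γ) (fun γ => omg lam ^ F γ) u =
      ∑ i ∈ range (L - u), omg lam ^ (E (i + u) - F i) := by
  rw [aCorr, if_pos (Int.natCast_nonneg u), Int.toNat_natCast]
  refine sum_congr rfl fun i _ => ?_
  rw [conj_omg_zpow, ← zpow_add₀ (omg_ne_zero _), sub_eq_add_neg]

lemma dig_eq_toNat_testBit (m γ : ℕ) (j : Fin m) : dig 2 m γ j = (γ.testBit j).toNat :=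
  (Nat.toNat_testBit γ j).symm

lemma dig_lt_two (m γ : ℕ) (j : Fin m) : dig 2 m γ j < 2 := Nat.mod_lt _ two_pos

lemma dig_xor_two_pow {m : ℕ} (γ : ℕ) (k : Fin m) :
    dig 2 m (γ ^^^ 2 ^ (k : ℕ)) = Function.update (dig 2 m γ) k (1 - dig 2 m γ k) := by
  funext j
  simp only [dig_eq_toNat_testBit, Nat.testBit_xor, Nat.testBit_two_pow, Function.update_apply]
  rcases eq_or_ne j k with rfl | hjk
  · cases γ.testBit j <;> simp
  · simp [hjk, Fin.val_ne_of_ne hjk.symm]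

lemma eq_of_dig_eq {m γ δ : ℕ} (hγ : γ < 2 ^ m) (hδ : δ < 2 ^ m)
    (h : dig 2 m γ = dig 2 m δ) : γ = δ := by
  refine Nat.eq_of_testBit_eq fun j => ?_
  rcases lt_or_ge j m with hj | hj
  · rw [Nat.testBit_eq_decide_div_mod_eq, Nat.testBit_eq_decide_div_mod_eq]
    exact congrArg (decide <| · = 1) (congrFun h ⟨j, hj⟩)
  · have hm : 2 ^ m ≤ 2 ^ j := Nat.pow_le_pow_right two_pos hj
    rw [Nat.testBit_lt_two_pow (hγ.trans_le hm), Nat.testBit_lt_two_pow (hδ.trans_le hm)]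

lemma xor_two_pow_eq (x k : ℕ) :
    x ^^^ 2 ^ k = if x / 2 ^ k % 2 = 0 then x + 2 ^ k else x - 2 ^ k := by
  have hsplit : x ^^^ 2 ^ k = 2 ^ k * (x / 2 ^ k ^^^ 1) + x % 2 ^ k := by
    rw [← Nat.div_add_mod (x ^^^ 2 ^ k) (2 ^ k), Nat.xor_div_two_pow, Nat.xor_mod_two_pow,
      Nat.div_self (by positivity), Nat.mod_self, Nat.xor_zero]
  have hx := Nat.div_add_mod x (2 ^ k)
  rw [hsplit]
  split_ifs with h0
  · rw [Nat.xor_one_of_even (Nat.even_iff.mpr h0)]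
    linarith
  · have hodd : Odd (x / 2 ^ k) := Nat.odd_iff.mpr (by omega)
    have hpos : 1 ≤ x / 2 ^ k := hodd.pos
    rw [Nat.xor_one_of_odd hodd, Nat.mul_sub_one]
    have : 2 ^ k ≤ 2 ^ k * (x / 2 ^ k) := Nat.le_mul_of_pos_right _ hpos
    omega

lemma xor_two_pow_ne (x k : ℕ) : x ^^^ 2 ^ k ≠ x := fun h => by
  simpa using congrArg (x ^^^ ·) h

lemma add_xor_two_pow {i u k : ℕ} (h : (i + u) / 2 ^ k % 2 = i / 2 ^ k % 2) :
    (i + u) ^^^ 2 ^ k = (i ^^^ 2 ^ k) + u := by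
  rw [xor_two_pow_eq, xor_two_pow_eq, h]
  split_ifs with h0
  · omega
  · have : 2 ^ k ≤ i := (Nat.div_pos_iff.mp (Nat.pos_of_ne_zero fun h => by simp [h] at h0)).2
    omega

lemma sum_range_mul_succ_update_sub (X Y : ℕ → ℤ) {M r : ℕ} (hr : r < M) (a : ℤ)
    (hXY : ∀ n ≤ r, X n = Y n) :
    ∑ n ∈ range M, Function.update X r a n * Function.update X r a (n + 1)
      - ∑ n ∈ range M, Function.update Y r a n * Function.update Y r a (n + 1) =
    ∑ n ∈ range M, X n * X (n + 1) - ∑ n ∈ range M, Y n * Y (n + 1)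
      + (a - X r) * (X (r + 1) - Y (r + 1)) := by
  have hterm : ∀ n ∈ range M,
      Function.update X r a n * Function.update X r a (n + 1)
        - Function.update Y r a n * Function.update Y r a (n + 1) =
      X n * X (n + 1) - Y n * Y (n + 1)
        + if n = r then (a - X r) * (X (r + 1) - Y (r + 1)) else 0 := by
    intro n _
    rcases lt_trichotomy n r with hn | rfl | hn
    · have h1 := hXY n hn.le
      have h2 := hXY (n + 1) hn
      by_cases hn1 : n + 1 = r
      · subst hn1
        simp [h1, h2]
      · simp [hn.ne, hn1, h1, h2]
    · simp [hXY n le_rfl]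
      ring
    · simp [hn.ne', (hn.trans (Nat.lt_succ_self n)).ne']
  rw [← sum_sub_distrib, ← sum_sub_distrib, sum_congr rfl hterm, sum_add_distrib,
    sum_ite_eq' (range M) r, if_pos (mem_range.mpr hr)]

def alongPath {m : ℕ} (π : Equiv.Perm (Fin m)) (x : Fin m → ℕ) (n : ℕ) : ℤ :=
  if hn : n < m then x (π ⟨n, hn⟩) else 0

lemma alongPath_of_lt {m : ℕ} (π : Equiv.Perm (Fin m)) (x : Fin m → ℕ) {n : ℕ} (hn : n < m) :
    alongPath π x n = x (π ⟨n, hn⟩) := dif_pos hn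

lemma alongPath_update {m : ℕ} (π : Equiv.Perm (Fin m)) (x : Fin m → ℕ) {r : ℕ} (hr : r < m)
    (v : ℕ) :
    alongPath π (Function.update x (π ⟨r, hr⟩) v) = Function.update (alongPath π x) r v := by
  funext n
  by_cases hn : n < m
  · simp [alongPath, hn, Function.update_apply, Fin.ext_iff]
  · simp [alongPath, hn, show n ≠ r by omega]

lemma sum_fin_path_eq {m : ℕ} (π : Equiv.Perm (Fin m)) (x : Fin m → ℕ) :
    ∑ β : Fin (m - 1), (x (π (Fin.castLE (Nat.sub_le m 1) β)) : ℤ) *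
        (x (π ⟨(β : ℕ) + 1, by have := β.isLt; omega⟩) : ℤ) =
      ∑ n ∈ range (m - 1), alongPath π x n * alongPath π x (n + 1) := by
  rw [← Fin.sum_univ_eq_sum_range]
  refine sum_congr rfl fun β _ => ?_
  have := β.isLt
  rw [alongPath_of_lt π x (show (β : ℕ) < m by omega),
    alongPath_of_lt π x (show (β : ℕ) + 1 < m by omega)]
  rfl

lemma natCast_two_pow_div_two {h : ℕ} (hh : 0 < h) : ((2 ^ h / 2 : ℕ) : ℤ) = 2 ^ (h - 1) := by
  obtain ⟨h, rfl⟩ := Nat.exists_eq_add_one_of_ne_zero hh.ne'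
  simp [pow_succ]

section Exponent

variable {h m : ℕ} (hm : 0 < m) (π : Equiv.Perm (Fin m)) (cf : Fin m → ZMod (2 ^ h))
  (c : ZMod (2 ^ h))

local notation "𝒜" => aFun 2 m (2 ^ h) hm π cf c

lemma aFun_sub_aFun_same (hh : 0 < h) (t t' α : ℕ) (x : Fin m → ℕ) :
    𝒜 t α x - 𝒜 t' α x = 2 ^ (h - 1) * ((t - t') * x (π ⟨m - 1, by omega⟩)) := by
  rw [aFun, aFun, natCast_two_pow_div_two hh]
  ring

lemma aFun_one_sub_aFun_one (hh : 0 < h) (t t' : ℕ) (x y : Fin m → ℕ) :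
    𝒜 t 1 x - 𝒜 t' 1 y =
      𝒜 t 0 x - 𝒜 t' 0 y + 2 ^ (h - 1) * (x (π ⟨0, hm⟩) - y (π ⟨0, hm⟩)) := by
  rw [aFun, aFun, aFun, aFun, natCast_two_pow_div_two hh]
  push_cast
  ring

lemma aFun_update_sub_aFun_update (hh : 0 < h) (t t' α : ℕ) (x y : Fin m → ℕ) {r : ℕ}
    (hr : r + 1 < m) (v : ℕ) (hxy : ∀ β : Fin m, (β : ℕ) ≤ r → x (π β) = y (π β)) :
    𝒜 t α (Function.update x (π ⟨r, by omega⟩) v)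
        - 𝒜 t' α (Function.update y (π ⟨r, by omega⟩) v) =
      𝒜 t α x - 𝒜 t' α y
        + 2 ^ (h - 1) * ((v - x (π ⟨r, by omega⟩)) * (x (π ⟨r + 1, hr⟩) - y (π ⟨r + 1, hr⟩))) := by
  have hdiff : ∀ β, (Function.update x (π ⟨r, by omega⟩) v β : ℤ)
      - Function.update y (π ⟨r, by omega⟩) v β = x β - y β := by
    intro β
    by_cases hβ : β = π ⟨r, by omega⟩
    · simp [hβ, hxy ⟨r, by omega⟩ le_rfl]
    · simp [hβ]
  have hlast : ∀ z : Fin m → ℕ, Function.update z (π ⟨r, by omega⟩) v (π ⟨m - 1, by omega⟩)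
      = z (π ⟨m - 1, by omega⟩) := fun z =>
    Function.update_of_ne (by simp [Fin.ext_iff]; omega) _ _
  have hlin : ∑ β, ((cf β).val : ℤ) * Function.update x (π ⟨r, by omega⟩) v β
      - ∑ β, ((cf β).val : ℤ) * Function.update y (π ⟨r, by omega⟩) v β =
      ∑ β, ((cf β).val : ℤ) * x β - ∑ β, ((cf β).val : ℤ) * y β := by
    simp only [← sum_sub_distrib, ← mul_sub, hdiff]
  have hpath := sum_range_mul_succ_update_sub (alongPath π x) (alongPath π y)
    (show r < m - 1 by omega) v fun n hn => by
      rw [alongPath_of_lt π x (by omega), alongPath_of_lt π y (by omega)]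
      exact_mod_cast hxy ⟨n, by omega⟩ hn
  rw [← alongPath_update π x (by omega), ← alongPath_update π y (by omega),
    alongPath_of_lt π x (show r < m by omega), alongPath_of_lt π x hr,
    alongPath_of_lt π y hr] at hpath
  simp only [aFun, fQuad, natCast_two_pow_div_two hh, sum_fin_path_eq, hlast]
  linear_combination 2 ^ (h - 1) * hpath + hlin + 2 ^ (h - 1) * α * hdiff (π ⟨0, hm⟩)

end Exponent

section Pairing

variable {m : ℕ} (π : Equiv.Perm (Fin m))

def diffSet (x y : Fin m → ℕ) : Finset (Fin m) := univ.filter fun β => x (π β) ≠ y (π β)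

@[simp]
lemma mem_diffSet {x y : Fin m → ℕ} {β : Fin m} : β ∈ diffSet π x y ↔ x (π β) ≠ y (π β) := by
  simp [diffSet]

lemma diffSet_update (x y : Fin m → ℕ) (k : Fin m) (hx : x k < 2) (hy : y k < 2) :
    diffSet π (Function.update x k (1 - x k)) (Function.update y k (1 - y k)) = diffSet π x y := by
  ext β
  simp only [diffSet, mem_filter, mem_univ, true_and, Function.update_apply]
  split_ifs with hβ
  · subst hβ; omega
  · rfl

lemma exists_eq_min'_diffSet (hm : 0 < m) {x y : Fin m → ℕ} (hD : (diffSet π x y).Nonempty)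
    (h0 : ⟨0, hm⟩ ∉ diffSet π x y) :
    ∃ r, ∃ hr : r + 1 < m, (diffSet π x y).min' hD = ⟨r + 1, hr⟩ ∧
      (∀ β : Fin m, (β : ℕ) ≤ r → x (π β) = y (π β)) ∧ x (π ⟨r + 1, hr⟩) ≠ y (π ⟨r + 1, hr⟩) := by
  set b := (diffSet π x y).min' hD
  have hb : b ∈ diffSet π x y := min'_mem _ hD
  have hb0 : (b : ℕ) ≠ 0 := fun hb0 => h0 ((Fin.ext hb0 : b = ⟨0, hm⟩) ▸ hb)
  refine ⟨(b : ℕ) - 1, by omega, Fin.ext (by simp; omega), fun β hβ => ?_, ?_⟩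
  · by_contra hne
    have := min'_le (diffSet π x y) β ((mem_diffSet π).mpr hne)
    rw [← Fin.val_fin_le] at this
    omega
  · have : (⟨(b : ℕ) - 1 + 1, by omega⟩ : Fin m) = b := Fin.ext (by simp; omega)
    simpa [this] using hb

end Pairing

section ShiftPartner

variable {m : ℕ} (hm : 0 < m) (π : Equiv.Perm (Fin m))

noncomputable def pivotBit (D : Finset (Fin m)) : ℕ :=
  if hD : D.Nonempty then π ⟨(D.min' hD : ℕ) - 1, (Nat.sub_le _ _).trans_lt (Fin.isLt _)⟩ else 0

noncomputable def shiftPartner (u i : ℕ) : ℕ :=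
  i ^^^ 2 ^ pivotBit π (diffSet π (dig 2 m (i + u)) (dig 2 m i))

lemma diffSet_dig_nonempty {u i : ℕ} (hu : 0 < u) (hiu : i + u < 2 ^ m) :
    (diffSet π (dig 2 m (i + u)) (dig 2 m i)).Nonempty := by
  by_contra hD
  have hdig : dig 2 m (i + u) = dig 2 m i := funext fun j => by
    by_contra hj
    exact hD ⟨π.symm j, by simpa [diffSet] using hj⟩
  have := eq_of_dig_eq hiu (by omega) hdig
  omega

lemma exists_shiftPartner_eq {u i : ℕ} (hu : 0 < u) (hiu : i + u < 2 ^ m)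
    (h0 : ⟨0, hm⟩ ∉ diffSet π (dig 2 m (i + u)) (dig 2 m i)) :
    ∃ r, ∃ hr : r + 1 < m,
      shiftPartner π u i = i ^^^ 2 ^ (π ⟨r, by omega⟩ : ℕ) ∧
      shiftPartner π u i + u = (i + u) ^^^ 2 ^ (π ⟨r, by omega⟩ : ℕ) ∧
      (∀ β : Fin m, (β : ℕ) ≤ r → dig 2 m (i + u) (π β) = dig 2 m i (π β)) ∧
      dig 2 m (i + u) (π ⟨r + 1, hr⟩) ≠ dig 2 m i (π ⟨r + 1, hr⟩) := by
  have hD := diffSet_dig_nonempty π hu hiu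
  obtain ⟨r, hr, hmin, hagree, hne⟩ := exists_eq_min'_diffSet π hm hD h0
  have hσ : shiftPartner π u i = i ^^^ 2 ^ (π ⟨r, by omega⟩ : ℕ) := by
    simp [shiftPartner, pivotBit, hD, hmin]
  refine ⟨r, hr, hσ, ?_, hagree, hne⟩
  rw [hσ, add_xor_two_pow (hagree ⟨r, by omega⟩ le_rfl)]

lemma diffSet_dig_xor_two_pow (u i : ℕ) (k : Fin m) :
    diffSet π (dig 2 m ((i + u) ^^^ 2 ^ (k : ℕ))) (dig 2 m (i ^^^ 2 ^ (k : ℕ))) =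
      diffSet π (dig 2 m (i + u)) (dig 2 m i) := by
  rw [dig_xor_two_pow, dig_xor_two_pow,
    diffSet_update _ _ _ _ (dig_lt_two _ _ _) (dig_lt_two _ _ _)]

section

variable {u i : ℕ} (hu : 0 < u) (hiu : i + u < 2 ^ m)
  (h0 : ⟨0, hm⟩ ∉ diffSet π (dig 2 m (i + u)) (dig 2 m i))
include hu hiu h0

lemma diffSet_shiftPartner :
    diffSet π (dig 2 m (shiftPartner π u i + u)) (dig 2 m (shiftPartner π u i)) =
      diffSet π (dig 2 m (i + u)) (dig 2 m i) := by
  obtain ⟨r, hr, hσ, hσu, -⟩ := exists_shiftPartner_eq hm π hu hiu h0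
  rw [hσu, hσ, diffSet_dig_xor_two_pow]

lemma shiftPartner_shiftPartner : shiftPartner π u (shiftPartner π u i) = i := by
  rw [shiftPartner, diffSet_shiftPartner hm π hu hiu h0, shiftPartner, Nat.xor_xor_cancel_right]

lemma shiftPartner_add_lt : shiftPartner π u i + u < 2 ^ m := by
  obtain ⟨r, hr, -, hσu, -⟩ := exists_shiftPartner_eq hm π hu hiu h0
  rw [hσu]
  exact Nat.xor_lt_two_pow hiu (Nat.pow_lt_pow_right one_lt_two (Fin.isLt _))

end

end ShiftPartner

lemma odd_natCast_sub_natCast {a b : ℕ} (ha : a < 2) (hb : b < 2) (hab : a ≠ b) :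
    Odd ((a : ℤ) - b) := by
  rw [Int.odd_iff]
  omega

section Sums

variable {h m : ℕ} (hh : 0 < h) (hm : 0 < m) (π : Equiv.Perm (Fin m))
  (cf : Fin m → ZMod (2 ^ h)) (c : ZMod (2 ^ h))

local notation "𝒜" => aFun 2 m (2 ^ h) hm π cf c

include hh

lemma sum_range_two_omg_eq_zero (t t' : ℕ) {x y : Fin m → ℕ} (hx : x (π ⟨0, hm⟩) < 2)
    (hy : y (π ⟨0, hm⟩) < 2) (hxy : x (π ⟨0, hm⟩) ≠ y (π ⟨0, hm⟩)) :
    ∑ α ∈ range 2, omg (2 ^ h) ^ (𝒜 t α x - 𝒜 t' α y) = 0 := by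
  rw [sum_range_succ, sum_range_one]
  exact omg_two_pow_zpow_add_zpow_eq_zero hh (odd_natCast_sub_natCast hx hy hxy)
    (aFun_one_sub_aFun_one hm π cf c hh t t' x y)

lemma omg_pow_shiftPartner (t t' α : ℕ) {u i : ℕ} (hu : 0 < u) (hiu : i + u < 2 ^ m)
    (h0 : ⟨0, hm⟩ ∉ diffSet π (dig 2 m (i + u)) (dig 2 m i)) :
    omg (2 ^ h) ^
        (𝒜 t α (dig 2 m (shiftPartner π u i + u)) - 𝒜 t' α (dig 2 m (shiftPartner π u i))) =
      -omg (2 ^ h) ^ (𝒜 t α (dig 2 m (i + u)) - 𝒜 t' α (dig 2 m i)) := by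
  obtain ⟨r, hr, hσ, hσu, hagree, hne⟩ := exists_shiftPartner_eq hm π hu hiu h0
  have hx := dig_lt_two m (i + u) (π ⟨r, by omega⟩)
  rw [hσu, hσ, dig_xor_two_pow, dig_xor_two_pow, ← hagree ⟨r, by omega⟩ le_rfl,
    aFun_update_sub_aFun_update hm π cf c hh t t' α _ _ hr _ hagree]
  refine omg_two_pow_zpow_add_odd hh _ (Odd.mul ?_ (odd_natCast_sub_natCast
    (dig_lt_two _ _ _) (dig_lt_two _ _ _) hne))
  rw [Int.odd_iff]
  omega

lemma sum_shift_eq_zero (t t' : ℕ) {u : ℕ} (hu : 0 < u) :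
    ∑ i ∈ range (2 ^ m - u), ∑ α ∈ range 2,
      omg (2 ^ h) ^ (𝒜 t α (dig 2 m (i + u)) - 𝒜 t' α (dig 2 m i)) = 0 := by
  rw [← sum_filter_add_sum_filter_not _ fun i => ⟨0, hm⟩ ∉ diffSet π (dig 2 m (i + u)) (dig 2 m i)]
  refine (congrArg₂ (· + ·) ?paired ?unpaired).trans (add_zero 0)
  case unpaired =>
    refine sum_eq_zero fun i hi => sum_range_two_omg_eq_zero hh hm π cf c t t' (dig_lt_two _ _ _)
      (dig_lt_two _ _ _) ?_
    simpa using (mem_filter.mp hi).2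
  case paired =>
    set S := (range (2 ^ m - u)).filter fun i => ⟨0, hm⟩ ∉ diffSet π (dig 2 m (i + u)) (dig 2 m i)
    have hmem : ∀ i ∈ S, i + u < 2 ^ m ∧ ⟨0, hm⟩ ∉ diffSet π (dig 2 m (i + u)) (dig 2 m i) :=
      fun i hi => by
        rw [mem_filter, mem_range] at hi
        exact ⟨by omega, hi.2⟩
    refine sum_involution (fun i _ => shiftPartner π u i) (fun i hi => ?_)
      (fun i _ _ => xor_two_pow_ne _ _) (fun i hi => ?_) (fun i hi => ?_) <;>
      obtain ⟨hiu, h0⟩ := hmem i hi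
    · simp only [omg_pow_shiftPartner hh hm π cf c t t' _ hu hiu h0, sum_neg_distrib,
        add_neg_cancel]
    · rw [mem_filter, mem_range, diffSet_shiftPartner hm π hu hiu h0]
      exact ⟨by have := shiftPartner_add_lt hm π hu hiu h0; omega, h0⟩
    · exact shiftPartner_shiftPartner hm π hu hiu h0

lemma sum_cross_eq_zero {t t' : ℕ} (ht : t < 2) (ht' : t' < 2) (htt' : t ≠ t') :
    ∑ i ∈ range (2 ^ m), ∑ α ∈ range 2,
      omg (2 ^ h) ^ (𝒜 t α (dig 2 m i) - 𝒜 t' α (dig 2 m i)) = 0 := by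
  have hk : (π ⟨m - 1, by omega⟩ : ℕ) < m := Fin.isLt _
  refine sum_involution (fun i _ => i ^^^ 2 ^ (π ⟨m - 1, by omega⟩ : ℕ)) (fun i _ => ?_)
    (fun i _ _ => xor_two_pow_ne _ _) (fun i hi => ?_) (fun i _ => Nat.xor_xor_cancel_right _ _)
  · set d := dig 2 m i (π ⟨m - 1, by omega⟩)
    have hd : d ≤ 1 := Nat.le_of_lt_succ (dig_lt_two _ _ _)
    have hodd : Odd (((t : ℤ) - t') * (1 - 2 * d)) :=
      (odd_natCast_sub_natCast ht ht' htt').mul ⟨-d, by ring⟩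
    rw [← sum_add_distrib]
    refine sum_eq_zero fun α _ => omg_two_pow_zpow_add_zpow_eq_zero hh hodd ?_
    rw [dig_xor_two_pow, aFun_sub_aFun_same hm π cf c hh, aFun_sub_aFun_same hm π cf c hh,
      Function.update_self, Nat.cast_sub hd]
    ring
  · exact mem_range.mpr (Nat.xor_lt_two_pow (mem_range.mp hi) (Nat.pow_lt_pow_right one_lt_two hk))

end Sums

section Correlation

variable {h m : ℕ} (hh : 0 < h) (hm : 0 < m) (π : Equiv.Perm (Fin m))
  (cf : Fin m → ZMod (2 ^ h)) (c : ZMod (2 ^ h))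

local notation "𝒜" => aFun 2 m (2 ^ h) hm π cf c

local notation "𝒞" => codeC 2 m (2 ^ h) hm π cf c

lemma codeCorr_codeC_natCast (t t' u : ℕ) :
    codeCorr 2 (2 ^ m) (𝒞 t) (𝒞 t') u =
      ∑ i ∈ range (2 ^ m - u), ∑ α ∈ range 2,
        omg (2 ^ h) ^ (𝒜 t α (dig 2 m (i + u)) - 𝒜 t' α (dig 2 m i)) := by
  rw [codeCorr, sum_comm]
  exact sum_congr rfl fun α _ => aCorr_omg_zpow _ _ _ _ u

include hh in
lemma codeCorr_codeC_natCast_eq {t t' : ℕ} (ht : t < 2) (ht' : t' < 2) (u : ℕ) :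
    codeCorr 2 (2 ^ m) (𝒞 t) (𝒞 t') u = if u = 0 ∧ t = t' then (2 : ℂ) ^ (m + 1) else 0 := by
  rw [codeCorr_codeC_natCast]
  rcases Nat.eq_zero_or_pos u with rfl | hu
  · by_cases htt' : t = t'
    · subst htt'
      simp [pow_succ]
    · rw [if_neg fun h => htt' h.2]
      simpa using sum_cross_eq_zero hh hm π cf c ht ht' htt'
  · rw [if_neg fun h => hu.ne' h.1]
    exact sum_shift_eq_zero hh hm π cf c t t' hu

include hh in
lemma codeCorr_codeC_eq {t t' : ℕ} (ht : t < 2) (ht' : t' < 2) (u : ℤ) :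
    codeCorr 2 (2 ^ m) (𝒞 t) (𝒞 t') u = if u = 0 ∧ t = t' then (2 : ℂ) ^ (m + 1) else 0 := by
  obtain ⟨n, rfl | rfl⟩ := Int.eq_nat_or_neg u
  · simpa using codeCorr_codeC_natCast_eq hh hm π cf c ht ht' n
  · rcases Nat.eq_zero_or_pos n with rfl | hn
    · simpa using codeCorr_codeC_natCast_eq hh hm π cf c ht ht' 0
    · rw [codeCorr_of_neg _ _ _ _ (by omega), neg_neg,
        codeCorr_codeC_natCast_eq hh hm π cf c ht' ht n, if_neg (by omega), if_neg (by omega),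
        map_zero]

end Correlation

/-- for `p = 2`, `q = 2^h` (so `λ = 2^h`), the two codes `C_0^2, C_1^2`
form a `(2,2,2^m)`-CCC over `Z_{2^h}`, and in particular for each `t ∈ {0,1}` the pair
`(ψ(a_t^0), ψ(a_t^1))` is a Golay complementary pair of length `2^m`. -/
theorem statement6 (h : ℕ) (hh : 0 < h) (m : ℕ) (hm : 0 < m)
    (π : Equiv.Perm (Fin m)) (cf : Fin m → ZMod (2 ^ h)) (c : ZMod (2 ^ h)) :
    (∀ t t' : ℕ, t < 2 → t' < 2 → ∀ u : ℤ, u.natAbs < 2 ^ m →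
      codeCorr 2 (2 ^ m) (codeC 2 m (2 ^ h) hm π cf c t)
          (codeC 2 m (2 ^ h) hm π cf c t') u =
        if u = 0 ∧ t = t' then (2 : ℂ) ^ (m + 1) else 0) ∧
    (∀ t : ℕ, t < 2 → ∀ u : ℤ, u ≠ 0 → u.natAbs < 2 ^ m →
      aCorr (2 ^ m) (codeC 2 m (2 ^ h) hm π cf c t 0) (codeC 2 m (2 ^ h) hm π cf c t 0) u
        + aCorr (2 ^ m) (codeC 2 m (2 ^ h) hm π cf c t 1)
            (codeC 2 m (2 ^ h) hm π cf c t 1) u = 0) := by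
  refine ⟨fun t t' ht ht' u _ => codeCorr_codeC_eq hh hm π cf c ht ht' u, fun t ht u hu0 _ => ?_⟩
  have hgolay := codeCorr_codeC_eq hh hm π cf c ht ht u
  rwa [if_neg fun h => hu0 h.1, codeCorr, sum_range_succ, sum_range_one] at hgolay
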